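/- Let ℓ ∈ {ℓ_log, ℓ_lin} and let f be the SCL objective. If the matrix [X Z] ∈ ℝ^{n×(p₁+p₂)} is (s₁+s₂)-regular, then: (i) the SCL problem has a global minimizer; (ii) it has only finitely many local minimizers; and (iii) every local minimizer β* is a strict local minimizer: there exist δ > 0 and l_f > 0 (the (s₁+s₂)-restricted strong convexity parameter of f) such that f(β) ≥ f(β*) + (l_f/2)‖β − β*‖² for every feasible β with ‖β − β*‖ < δ; in particular β* is the unique minimizer of f over the feasible set intersected with that neighborhood. -/

import Mathlib

open Matrix Filter Topology Finset
open scoped RealInnerProductSpace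

noncomputable section SCL

/-- the zero "norm" of a vector: the number of its nonzero entries. -/
def zeroNorm {p : ℕ} (x : EuclideanSpace ℝ (Fin p)) : ℕ :=
  {i | x i ≠ 0}.ncard

/-- the `k`-th largest entry in magnitude (`1`-indexed; junk value `0` if `k = 0` or `k > p`). -/
def kthLargestAbs {p : ℕ} (x : EuclideanSpace ℝ (Fin p)) (k : ℕ) : ℝ :=
  ((Finset.univ.val.map fun i => |x i|).sort (· ≤ ·)).getD (p - k) 0

/-- the (set-valued) Euclidean projection onto a set `S`. -/
def projSet {m : ℕ} (S : Set (EuclideanSpace ℝ (Fin m))) (w : EuclideanSpace ℝ (Fin m)) :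
    Set (EuclideanSpace ℝ (Fin m)) :=
  {u | u ∈ S ∧ ∀ v ∈ S, ‖u - w‖ ≤ ‖v - w‖}

/-- the first block `β₁` of `β = (β₁; β₂)`. -/
def part1 {p₁ p₂ : ℕ} (β : EuclideanSpace ℝ (Fin (p₁ + p₂))) : EuclideanSpace ℝ (Fin p₁) :=
  WithLp.toLp 2 (fun i => β (Fin.castAdd p₂ i))

/-- the second block `β₂` of `β = (β₁; β₂)`. -/
def part2 {p₁ p₂ : ℕ} (β : EuclideanSpace ℝ (Fin (p₁ + p₂))) : EuclideanSpace ℝ (Fin p₂) :=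
  WithLp.toLp 2 (fun i => β (Fin.natAdd p₁ i))

/-- the logistic loss `ℓ_log(β; X, y)`. -/
def ellLog {n p : ℕ} (X : Matrix (Fin n) (Fin p) ℝ) (y : Fin n → ℝ)
    (β : EuclideanSpace ℝ (Fin p)) : ℝ :=
  ∑ i, (Real.log (1 + Real.exp (X.mulVec β i)) - y i * X.mulVec β i)

/-- the linear regression loss `ℓ_lin(β; X, y)`. -/
def ellLin {n p : ℕ} (X : Matrix (Fin n) (Fin p) ℝ) (y : Fin n → ℝ)
    (β : EuclideanSpace ℝ (Fin p)) : ℝ :=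
  (1 / 2) * ∑ i, (y i - X.mulVec β i) ^ 2

/-- the SCL objective `f(β₁,β₂) = (1/n) (a ℓ₁(β₁;X,y) + b ℓ₂(β₂;Z,y) + (c/2)‖Xβ₁ − Zβ₂‖²)`,
as a function of the merged vector `β = (β₁; β₂)`. -/
def sclObj {n p₁ p₂ : ℕ}
    (ℓ₁ : Matrix (Fin n) (Fin p₁) ℝ → (Fin n → ℝ) → EuclideanSpace ℝ (Fin p₁) → ℝ)
    (ℓ₂ : Matrix (Fin n) (Fin p₂) ℝ → (Fin n → ℝ) → EuclideanSpace ℝ (Fin p₂) → ℝ)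
    (X : Matrix (Fin n) (Fin p₁) ℝ) (Z : Matrix (Fin n) (Fin p₂) ℝ) (y : Fin n → ℝ)
    (a b c : ℝ) (β : EuclideanSpace ℝ (Fin (p₁ + p₂))) : ℝ :=
  (1 / (n : ℝ)) * (a * ℓ₁ X y (part1 β) + b * ℓ₂ Z y (part2 β)
    + (c / 2) * ∑ i, (X.mulVec (part1 β) i - Z.mulVec (part2 β) i) ^ 2)

/-- the largest eigenvalue of a symmetric matrix, via the Rayleigh quotient. -/
def lambdaMax {ι : Type*} [Fintype ι] (M : Matrix ι ι ℝ) : ℝ :=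
  sSup {r | ∃ v : EuclideanSpace ℝ ι, ‖v‖ = 1 ∧ r = ∑ i, v i * M.mulVec v i}

/-- the smallest eigenvalue of a symmetric matrix, via the Rayleigh quotient. -/
def lambdaMin {ι : Type*} [Fintype ι] (M : Matrix ι ι ℝ) : ℝ :=
  sInf {r | ∃ v : EuclideanSpace ℝ ι, ‖v‖ = 1 ∧ r = ∑ i, v i * M.mulVec v i}

/-- the 2×2 block matrix `[[A, B], [C, D]]`, indexed by `Fin (p₁ + p₂)`. -/
def blockMat {p₁ p₂ : ℕ} (A : Matrix (Fin p₁) (Fin p₁) ℝ) (B : Matrix (Fin p₁) (Fin p₂) ℝ)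
    (C : Matrix (Fin p₂) (Fin p₁) ℝ) (D : Matrix (Fin p₂) (Fin p₂) ℝ) :
    Matrix (Fin (p₁ + p₂)) (Fin (p₁ + p₂)) ℝ :=
  Matrix.reindex finSumFinEquiv finSumFinEquiv (Matrix.fromBlocks A B C D)

/-- a square matrix as a continuous linear map on Euclidean space. -/
def matCLM {ι : Type*} [Fintype ι] [DecidableEq ι] (M : Matrix ι ι ℝ) :
    EuclideanSpace ℝ ι →L[ℝ] EuclideanSpace ℝ ι :=
  LinearMap.toContinuousLinearMap (Matrix.toEuclideanLin M)

/-- `A` is `s`-regular if any `s` of its columns are linearly independent. -/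
def sRegular {n p : ℕ} (A : Matrix (Fin n) (Fin p) ℝ) (s : ℕ) : Prop :=
  ∀ T : Finset (Fin p), T.card = s →
    LinearIndependent ℝ (fun j : {x // x ∈ T} => Aᵀ j.1)

/-- the feasible set `Σ = Σ_{s₁}^{p₁} × Σ_{s₂}^{p₂}` of the SCL problem, in merged form. -/
def feas (p₁ p₂ s₁ s₂ : ℕ) : Set (EuclideanSpace ℝ (Fin (p₁ + p₂))) :=
  {β | zeroNorm (part1 β) ≤ s₁ ∧ zeroNorm (part2 β) ≤ s₂}

/-- `β` is an `α`-stationary point of the SCL problem with objective `f`. -/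
def alphaStat {p₁ p₂ : ℕ} (f : EuclideanSpace ℝ (Fin (p₁ + p₂)) → ℝ) (s₁ s₂ : ℕ) (α : ℝ)
    (β : EuclideanSpace ℝ (Fin (p₁ + p₂))) : Prop :=
  part1 β ∈ projSet {v | zeroNorm v ≤ s₁} (part1 β - α • part1 (gradient f β)) ∧
  part2 β ∈ projSet {v | zeroNorm v ≤ s₂} (part2 β - α • part2 (gradient f β))

end SCL

/-!
Write the objective as `g β + κ ‖Xβ₁ - Zβ₂‖²` with `g` convex and `κ = c / (2n) > 0`. On a
coordinate subspace `{β | supp β ⊆ T}` with `|T| ≤ s₁ + s₂`, regularity of `[X Z]` makes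
`β ↦ Xβ₁ - Zβ₂` injective, so `‖Xβ₁ - Zβ₂‖² ≥ m ‖β‖²` there, and since there are finitely many
such `T` the constant `m > 0` can be taken uniform: the objective is strongly convex, with one
modulus, on every coordinate subspace contained in the feasible set.

The feasible set is the finite union of these subspaces, and a continuous strongly convex function
attains its minimum on each of them; the smallest of these minima is the global one. A local
minimizer `β*` is a global minimizer on the subspace of its own support, so distinct local
minimizers have distinct supports, of which there are finitely many. Finally, every feasible `β`
close enough to `β*` has `supp β ⊇ supp β*`, so `β*` and `β` lie in the subspace of `supp β`, where
strong convexity at the minimizer `β*` gives quadratic growth.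
-/

open Set Function

section StrongConvexity

variable {E : Type*} [NormedAddCommGroup E] [NormedSpace ℝ E] {s : Set E} {m : ℝ} {f : E → ℝ}

lemma StrongConvexOn.const_mul (hf : StrongConvexOn s m f) {c : ℝ} (hc : 0 ≤ c) :
    StrongConvexOn s (c * m) fun x => c * f x := by
  refine ⟨hf.1, fun x hx y hy a b ha hb hab => ?_⟩
  have h := mul_le_mul_of_nonneg_left (hf.2 hx hy ha hb hab) hc
  simp only [smul_eq_mul] at h ⊢
  linarith

lemma StrongConvexOn.add_sq_le_of_isMinOn (hf : StrongConvexOn s m f) {x y : E} (hx : x ∈ s)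
    (hmin : IsMinOn f s x) (hy : y ∈ s) : f x + m / 2 * ‖y - x‖ ^ 2 ≤ f y := by
  set q := m / 2 * ‖y - x‖ ^ 2 with hq
  -- compare `f x` with the values of `f` on the segment `[x, y]`, then let the point tend to `x`
  have hseg : ∀ t ∈ Ioo (0 : ℝ) 1, f x + (1 - t) * q ≤ f y := by
    rintro t ⟨ht0, ht1⟩
    have hconv := hf.2 hx hy (sub_nonneg.2 ht1.le) ht0.le (sub_add_cancel 1 t)
    have hle : f x ≤ f ((1 - t) • x + t • y) :=
      isMinOn_iff.1 hmin _ (hf.1 hx hy (sub_nonneg.2 ht1.le) ht0.le (sub_add_cancel 1 t))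
    rw [norm_sub_rev] at hconv
    simp only [smul_eq_mul, ← hq] at hconv
    refine le_of_mul_le_mul_left ?_ ht0
    nlinarith
  have hlim : Tendsto (fun t : ℝ => f x + (1 - t) * q) (𝓝[>] 0) (𝓝 (f x + q)) :=
    tendsto_nhdsWithin_of_tendsto_nhds (by simpa using (Continuous.tendsto (by fun_prop) 0 :
      Tendsto (fun t : ℝ => f x + (1 - t) * q) _ _))
  exact le_of_tendsto hlim (eventually_of_mem (Ioo_mem_nhdsGT one_pos) hseg)

lemma StrongConvexOn.exists_forall_le_of_le_norm_sub [ProperSpace E] (hf : StrongConvexOn s m f)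
    (hm : 0 < m) (hfc : ContinuousOn f s) (hs : IsClosed s) {x₀ : E} (hx₀ : x₀ ∈ s) :
    ∃ R, ∀ x ∈ s, R ≤ ‖x - x₀‖ → f x₀ ≤ f x := by
  obtain ⟨L, hL⟩ : BddBelow (f '' (s ∩ Metric.closedBall x₀ 1)) :=
    ((isCompact_closedBall x₀ 1).inter_left hs).bddBelow_image (hfc.mono inter_subset_left)
  have hLx₀ : L ≤ f x₀ := hL ⟨x₀, ⟨hx₀, Metric.mem_closedBall_self zero_le_one⟩, rfl⟩
  refine ⟨1 + 2 * (f x₀ - L) / m, fun x hx hR => ?_⟩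
  set r := ‖x - x₀‖
  have hr : (f x₀ - L) ≤ (r - 1) * (m / 2) := by
    have := (div_le_iff₀ hm).1 (le_sub_iff_add_le'.2 hR)
    linarith
  have hr1 : 1 ≤ r := by nlinarith
  have hr0 : 0 < r := by linarith
  have ht0 : 0 ≤ r⁻¹ := inv_nonneg.2 hr0.le
  have ht1 : 0 ≤ 1 - r⁻¹ := sub_nonneg.2 (inv_le_one_of_one_le₀ hr1)
  -- `z` is the point of the segment `[x₀, x]` at distance `1` from `x₀`
  set z := (1 - r⁻¹) • x₀ + r⁻¹ • x
  have hz : z ∈ s ∩ Metric.closedBall x₀ 1 := by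
    refine ⟨hf.1 hx₀ hx ht1 ht0 (sub_add_cancel 1 _), ?_⟩
    rw [Metric.mem_closedBall, dist_eq_norm,
      show z - x₀ = r⁻¹ • (x - x₀) by simp only [z]; module, norm_smul, norm_inv, norm_norm,
      inv_mul_cancel₀ hr0.ne']
  have hconv := hf.2 hx₀ hx ht1 ht0 (sub_add_cancel 1 _)
  rw [norm_sub_rev] at hconv
  simp only [smul_eq_mul] at hconv
  have hscaled : r * L ≤ (r - 1) * f x₀ + f x - (r - 1) * r * (m / 2) := by
    have := mul_le_mul_of_nonneg_left ((hL ⟨z, hz, rfl⟩).trans hconv) hr0.le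
    have e : r * ((1 - r⁻¹) * f x₀ + r⁻¹ * f x - (1 - r⁻¹) * r⁻¹ * (m / 2 * r ^ 2))
        = (r - 1) * f x₀ + f x - (r - 1) * r * (m / 2) := by
      field_simp
    linarith
  nlinarith [mul_le_mul_of_nonneg_left hr hr0.le]

lemma StrongConvexOn.exists_isMinOn [ProperSpace E] (hf : StrongConvexOn s m f) (hm : 0 < m)
    (hfc : ContinuousOn f s) (hs : IsClosed s) (hne : s.Nonempty) : ∃ x ∈ s, IsMinOn f s x := by
  obtain ⟨x₀, hx₀⟩ := hne
  obtain ⟨R, hR⟩ := hf.exists_forall_le_of_le_norm_sub hm hfc hs hx₀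
  refine hfc.exists_isMinOn' hs hx₀ ?_
  have hfar : ∀ᶠ x in cocompact E, R + ‖x₀‖ ≤ ‖x‖ :=
    tendsto_norm_cocompact_atTop.eventually_ge_atTop _
  filter_upwards [hfar.filter_mono inf_le_left, mem_inf_of_right (mem_principal_self s)]
    with x hx hxs
  exact hR x hxs (by linarith [norm_sub_norm_le x x₀])

end StrongConvexity

section NormSq

variable {E F : Type*} [NormedAddCommGroup E] [InnerProductSpace ℝ E] [NormedAddCommGroup F]
  [InnerProductSpace ℝ F]

lemma strongConvexOn_univ_norm_sq : StrongConvexOn (univ : Set F) 2 fun x => ‖x‖ ^ 2 :=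
  strongConvexOn_iff_convex.2 (by simpa using convexOn_const (0 : ℝ) convex_univ)

lemma LinearMap.strongConvexOn_norm_map_sq (L : E →ₗ[ℝ] F) {V : Submodule ℝ E} {m : ℝ}
    (hV : ∀ v ∈ V, m * ‖v‖ ^ 2 ≤ ‖L v‖ ^ 2) : StrongConvexOn V (2 * m) fun x => ‖L x‖ ^ 2 := by
  refine ⟨V.convex, fun x hx y hy a b ha hb hab => ?_⟩
  have h := strongConvexOn_univ_norm_sq.2 (mem_univ (L x)) (mem_univ (L y)) ha hb hab
  have hxy := mul_le_mul_of_nonneg_left (hV (x - y) (V.sub_mem hx hy)) (mul_nonneg ha hb)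
  rw [← map_sub] at h
  simp only [map_add, map_smul, smul_eq_mul] at h ⊢
  linarith

end NormSq

section CoordSubspace

variable {ι : Type*}

def coordSubspace (T : Set ι) : Submodule ℝ (EuclideanSpace ℝ ι) where
  carrier := {v | support v.ofLp ⊆ T}
  add_mem' hv hw := (support_add _ _).trans (union_subset hv hw)
  zero_mem' := by simp
  smul_mem' c _ hv := (support_const_smul_subset c _).trans hv

lemma mem_coordSubspace {T : Set ι} {v : EuclideanSpace ℝ ι} :
    v ∈ coordSubspace T ↔ support v.ofLp ⊆ T := Iff.rfl

lemma mem_coordSubspace_support (v : EuclideanSpace ℝ ι) : v ∈ coordSubspace (support v.ofLp) :=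
  mem_coordSubspace.2 subset_rfl

lemma eventually_support_subset [Fintype ι] (x : EuclideanSpace ℝ ι) :
    ∀ᶠ y in 𝓝 x, support x.ofLp ⊆ support y.ofLp :=
  eventually_all.2 fun i => by
    by_cases hi : x i = 0
    · exact .of_forall fun y h => (h hi).elim
    · exact ((EuclideanSpace.proj i).continuous.continuousAt.eventually_ne hi).mono
        fun y hy _ => hy

lemma exists_mul_norm_sq_le_norm_map_sq [Fintype ι] {F : Type*} [NormedAddCommGroup F]
    [NormedSpace ℝ F] (L : EuclideanSpace ℝ ι →ₗ[ℝ] F) :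
    ∃ m > 0, ∀ T : Set ι, (∀ v ∈ coordSubspace T, L v = 0 → v = 0) →
      ∀ v ∈ coordSubspace T, m * ‖v‖ ^ 2 ≤ ‖L v‖ ^ 2 := by
  have hT : ∀ T : Set ι, ∃ K : NNReal, (∀ v ∈ coordSubspace T, L v = 0 → v = 0) →
      ∀ v ∈ coordSubspace T, ‖v‖ ≤ K * ‖L v‖ := by
    intro T
    by_cases hinj : ∀ v ∈ coordSubspace T, L v = 0 → v = 0
    · obtain ⟨K, -, hK⟩ := (L ∘ₗ (coordSubspace T).subtype).exists_antilipschitzWith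
        (LinearMap.ker_eq_bot'.2 fun v hv => Subtype.ext (hinj v v.2 hv))
      exact ⟨K, fun _ v hv => by simpa using hK.le_mul_norm_sub 0 ⟨v, hv⟩⟩
    · exact ⟨0, fun h => (hinj h).elim⟩
  choose K hK using hT
  obtain ⟨T₀, hT₀⟩ := Finite.exists_max K
  refine ⟨((K T₀ : ℝ) + 1)⁻¹ ^ 2, by positivity, fun T hinj v hv => ?_⟩
  have hv : ‖v‖ ≤ (K T₀ + 1) * ‖L v‖ :=
    (hK T hinj v hv).trans (by gcongr; exact (NNReal.coe_le_coe.2 (hT₀ T)).trans (by linarith))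
  rw [inv_pow, inv_mul_le_iff₀ (by positivity), ← mul_pow]
  exact pow_le_pow_left₀ (norm_nonneg _) hv 2

variable [Fintype ι] {S : Set (EuclideanSpace ℝ ι)} {f : EuclideanSpace ℝ ι → ℝ} {μ : ℝ}

lemma add_sq_le_of_isLocalMinOn_of_support_subset
    (hS : ∀ β ∈ S, (coordSubspace (support β.ofLp) : Set _) ⊆ S)
    (hf : ∀ β ∈ S, StrongConvexOn (coordSubspace (support β.ofLp)) μ f) (hμ : 0 ≤ μ)
    {βs β : EuclideanSpace ℝ ι} (hβs : IsLocalMinOn f S βs) (hβ : β ∈ S)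
    (hsub : support βs.ofLp ⊆ support β.ofLp) : f βs + μ / 2 * ‖β - βs‖ ^ 2 ≤ f β := by
  have hconv := (hf β hβ).convexOn fun r => mul_nonneg (div_nonneg hμ zero_le_two) (sq_nonneg r)
  have hmin := IsMinOn.of_isLocalMinOn_of_convexOn hsub (hβs.on_subset (hS β hβ)) hconv
  exact (hf β hβ).add_sq_le_of_isMinOn hsub hmin (mem_coordSubspace_support β)

lemma exists_add_sq_le_of_isLocalMinOn
    (hS : ∀ β ∈ S, (coordSubspace (support β.ofLp) : Set _) ⊆ S)
    (hf : ∀ β ∈ S, StrongConvexOn (coordSubspace (support β.ofLp)) μ f) (hμ : 0 ≤ μ)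
    {βs : EuclideanSpace ℝ ι} (hβs : IsLocalMinOn f S βs) :
    ∃ δ > 0, ∀ β ∈ S, ‖β - βs‖ < δ → f βs + μ / 2 * ‖β - βs‖ ^ 2 ≤ f β := by
  obtain ⟨δ, hδ, hsub⟩ := Metric.eventually_nhds_iff.1 (eventually_support_subset βs)
  exact ⟨δ, hδ, fun β hβ hβδ =>
    add_sq_le_of_isLocalMinOn_of_support_subset hS hf hμ hβs hβ (hsub (by rwa [dist_eq_norm]))⟩

lemma eq_of_add_mul_norm_sub_sq_le {E : Type*} [NormedAddCommGroup E] {x y : E} {a b c : ℝ}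
    (hc : 0 < c) (h : a + c * ‖y - x‖ ^ 2 ≤ b) (hba : b ≤ a) : y = x := by
  have : ‖y - x‖ ^ 2 ≤ 0 := by nlinarith
  simpa [sub_eq_zero] using this

lemma finite_setOf_isLocalMinOn
    (hS : ∀ β ∈ S, (coordSubspace (support β.ofLp) : Set _) ⊆ S)
    (hf : ∀ β ∈ S, StrongConvexOn (coordSubspace (support β.ofLp)) μ f) (hμ : 0 < μ) :
    {x | x ∈ S ∧ IsLocalMinOn f S x}.Finite := by
  -- a local minimizer is the unique minimizer on the coordinate subspace of its support
  refine Finite.of_finite_image (f := fun x => support x.ofLp) (toFinite _) ?_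
  intro x hx x' hx' hxx'
  have h := add_sq_le_of_isLocalMinOn_of_support_subset hS hf hμ.le hx.2 hx'.1 hxx'.le
  have h' := add_sq_le_of_isLocalMinOn_of_support_subset hS hf hμ.le hx'.2 hx.1 hxx'.ge
  exact (eq_of_add_mul_norm_sub_sq_le (half_pos hμ) h (by nlinarith [norm_nonneg (x - x')])).symm

lemma exists_isMinOn_of_strongConvexOn_coordSubspace
    (hS : ∀ β ∈ S, (coordSubspace (support β.ofLp) : Set _) ⊆ S)
    (hf : ∀ β ∈ S, StrongConvexOn (coordSubspace (support β.ofLp)) μ f) (hμ : 0 < μ)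
    (hfc : Continuous f) (hne : S.Nonempty) : ∃ x ∈ S, IsMinOn f S x := by
  have hT : ∀ T ∈ (fun β => support β.ofLp) '' S, ∃ x ∈ coordSubspace T,
      IsMinOn f (coordSubspace T) x := by
    rintro _ ⟨β, hβ, rfl⟩
    exact (hf β hβ).exists_isMinOn hμ hfc.continuousOn
      (coordSubspace _).closed_of_finiteDimensional ⟨0, zero_mem _⟩
  choose! xT hxT hxTmin using hT
  obtain ⟨_, ⟨β₀, hβ₀, rfl⟩, hmin⟩ :=
    exists_min_image _ (f ∘ xT) (toFinite _) (hne.image fun β => support β.ofLp)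
  refine ⟨_, hS β₀ hβ₀ (hxT _ (mem_image_of_mem _ hβ₀)), fun β hβ => ?_⟩
  exact (hmin _ (mem_image_of_mem _ hβ)).trans
    (hxTmin _ (mem_image_of_mem _ hβ) (mem_coordSubspace_support β))

end CoordSubspace

section Losses

open Real

lemma convexOn_log_one_add_exp : ConvexOn ℝ univ fun t : ℝ => log (1 + exp t) := by
  have hd : ∀ t, HasDerivAt (fun t => log (1 + exp t)) (exp t / (1 + exp t)) t := fun t => by
    simpa using ((hasDerivAt_exp t).const_add 1).log (by positivity)
  refine Monotone.convexOn_univ_of_deriv (fun t => (hd t).differentiableAt) ?_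
  rw [funext fun t => (hd t).deriv]
  intro s t hst
  rw [div_le_div_iff₀ (by positivity) (by positivity)]
  nlinarith [exp_le_exp.2 hst]

lemma convexOn_sub_sq (c : ℝ) : ConvexOn ℝ univ fun t : ℝ => (c - t) ^ 2 := by
  simpa [Function.comp_def] using
    (even_two.convexOn_pow (𝕜 := ℝ)).comp_affineMap (AffineMap.const ℝ ℝ c - AffineMap.id ℝ ℝ)

variable {n p : ℕ} (X : Matrix (Fin n) (Fin p) ℝ) (y : Fin n → ℝ)

lemma convexOn_sum_comp_mulVec {φ : Fin n → ℝ → ℝ} (hφ : ∀ i, ConvexOn ℝ univ (φ i)) :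
    ConvexOn ℝ univ fun β : EuclideanSpace ℝ (Fin p) => ∑ i, φ i ((X *ᵥ β.ofLp) i) := by
  refine ⟨convex_univ, fun u _ v _ a b ha hb hab => ?_⟩
  simp only [smul_eq_mul, Finset.mul_sum, ← Finset.sum_add_distrib]
  refine Finset.sum_le_sum fun i _ => ?_
  simpa [Matrix.mulVec_add, Matrix.mulVec_smul] using
    (hφ i).2 (mem_univ ((X *ᵥ u.ofLp) i)) (mem_univ ((X *ᵥ v.ofLp) i)) ha hb hab

lemma convexOn_ellLog : ConvexOn ℝ univ (ellLog X y) :=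
  convexOn_sum_comp_mulVec X fun i =>
    convexOn_log_one_add_exp.sub ((LinearMap.mul ℝ ℝ (y i)).concaveOn convex_univ)

lemma convexOn_ellLin : ConvexOn ℝ univ (ellLin X y) :=
  (convexOn_sum_comp_mulVec X fun i => convexOn_sub_sq (y i)).smul (by norm_num : (0 : ℝ) ≤ 1 / 2)

end Losses

section Feasible

variable {p p₁ p₂ s₁ s₂ : ℕ}

lemma zeroNorm_le_of_support_subset {x y : EuclideanSpace ℝ (Fin p)}
    (h : support x.ofLp ⊆ support y.ofLp) : zeroNorm x ≤ zeroNorm y :=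
  ncard_le_ncard h (toFinite _)

lemma zeroNorm_eq_add (β : EuclideanSpace ℝ (Fin (p₁ + p₂))) :
    zeroNorm β = zeroNorm (part1 β) + zeroNorm (part2 β) := by
  classical
  simp only [zeroNorm, ncard_eq_toFinset_card', toFinset_ofPred, Finset.card_filter,
    Fin.sum_univ_add, part1, part2]

lemma zero_mem_feas : (0 : EuclideanSpace ℝ (Fin (p₁ + p₂))) ∈ feas p₁ p₂ s₁ s₂ := by
  simp [feas, zeroNorm, part1, part2]

lemma zeroNorm_le_of_mem_feas {β : EuclideanSpace ℝ (Fin (p₁ + p₂))} (hβ : β ∈ feas p₁ p₂ s₁ s₂) :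
    zeroNorm β ≤ s₁ + s₂ :=
  zeroNorm_eq_add β ▸ add_le_add hβ.1 hβ.2

lemma coordSubspace_support_subset_feas {β : EuclideanSpace ℝ (Fin (p₁ + p₂))}
    (hβ : β ∈ feas p₁ p₂ s₁ s₂) :
    (coordSubspace (support β.ofLp) : Set _) ⊆ feas p₁ p₂ s₁ s₂ := fun v hv =>
  ⟨(zeroNorm_le_of_support_subset (x := part1 v) (y := part1 β) fun _ hi => hv hi).trans hβ.1,
    (zeroNorm_le_of_support_subset (x := part2 v) (y := part2 β) fun _ hi => hv hi).trans hβ.2⟩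

end Feasible

section Regularity

variable {n p : ℕ} {A : Matrix (Fin n) (Fin p) ℝ} {s : ℕ}

lemma sRegular.of_mul_col (hA : sRegular A s) (w : Fin p → ℝˣ) :
    sRegular (Matrix.of fun i j => (w j : ℝ) * A i j) s := by
  intro T hT
  convert (hA T hT).units_smul fun j => w j.1 using 1
  ext j i
  simp [Units.smul_def]

lemma sRegular.eq_zero_of_mulVec_eq_zero (hA : sRegular A s) (hsp : s ≤ p)
    {v : EuclideanSpace ℝ (Fin p)} (hv : zeroNorm v ≤ s) (h : A *ᵥ v.ofLp = 0) : v = 0 := by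
  classical
  obtain ⟨T, hvT, -, hT⟩ := Finset.exists_subsuperset_card_eq (n := s)
    (Finset.subset_univ (support v.ofLp).toFinset) (by rwa [← ncard_eq_toFinset_card'])
    (by simpa using hsp)
  have hzero : ∀ j ∉ T, v j = 0 := fun j hj => by
    by_contra hj0
    exact hj (hvT (by simpa using hj0))
  have hsum : ∑ j : T, v j.1 • Aᵀ j.1 = 0 := by
    rw [Finset.sum_coe_sort T fun j => v j • Aᵀ j,
      Finset.sum_subset (Finset.subset_univ T) fun j _ hj => by simp [hzero j hj]]
    ext i
    simpa [Matrix.mulVec, dotProduct, Finset.sum_apply, mul_comm] using congrFun h i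
  have hT0 := Fintype.linearIndependent_iff.1 (hA T hT) _ hsum
  ext j
  by_cases hj : j ∈ T
  · exact hT0 ⟨j, hj⟩
  · exact hzero j hj

end Regularity

section Coupling

variable {n p₁ p₂ : ℕ} (X : Matrix (Fin n) (Fin p₁) ℝ) (Z : Matrix (Fin n) (Fin p₂) ℝ)

def part1ₗ : EuclideanSpace ℝ (Fin (p₁ + p₂)) →ₗ[ℝ] EuclideanSpace ℝ (Fin p₁) where
  toFun := part1
  map_add' _ _ := rfl
  map_smul' _ _ := rfl

def part2ₗ : EuclideanSpace ℝ (Fin (p₁ + p₂)) →ₗ[ℝ] EuclideanSpace ℝ (Fin p₂) where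
  toFun := part2
  map_add' _ _ := rfl
  map_smul' _ _ := rfl

def couplingMatrix : Matrix (Fin n) (Fin (p₁ + p₂)) ℝ :=
  Matrix.of fun i => Fin.append (X i) (-Z i)

def couplingMap : EuclideanSpace ℝ (Fin (p₁ + p₂)) →ₗ[ℝ] EuclideanSpace ℝ (Fin n) :=
  Matrix.toLpLin 2 2 (couplingMatrix X Z)

lemma couplingMatrix_mulVec (β : EuclideanSpace ℝ (Fin (p₁ + p₂))) :
    couplingMatrix X Z *ᵥ β.ofLp = X *ᵥ (part1 β).ofLp - Z *ᵥ (part2 β).ofLp := by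
  ext i
  simp [couplingMatrix, Matrix.mulVec, dotProduct, Fin.sum_univ_add, part1, part2,
    sub_eq_add_neg]

lemma norm_couplingMap_sq (β : EuclideanSpace ℝ (Fin (p₁ + p₂))) :
    ‖couplingMap X Z β‖ ^ 2 = ∑ i, ((X *ᵥ (part1 β).ofLp) i - (Z *ᵥ (part2 β).ofLp) i) ^ 2 := by
  simp [couplingMap, EuclideanSpace.real_norm_sq_eq, Matrix.toLpLin_apply, couplingMatrix_mulVec]

variable {X Z}

lemma sRegular_couplingMatrix {s : ℕ}
    (hreg : sRegular (Matrix.of fun i => Fin.append (X i) (Z i)) s) :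
    sRegular (couplingMatrix X Z) s := by
  convert hreg.of_mul_col (Fin.append (fun _ => 1) fun _ => -1) using 1
  ext i j
  induction j using Fin.addCases <;> simp [couplingMatrix]

lemma eq_zero_of_couplingMap_eq_zero {s₁ s₂ : ℕ} (hs : s₁ + s₂ ≤ p₁ + p₂)
    (hreg : sRegular (Matrix.of fun i => Fin.append (X i) (Z i)) (s₁ + s₂))
    {β : EuclideanSpace ℝ (Fin (p₁ + p₂))} (hβ : β ∈ feas p₁ p₂ s₁ s₂) :
    ∀ v ∈ coordSubspace (support β.ofLp), couplingMap X Z v = 0 → v = 0 := fun v hv hv0 =>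
  (sRegular_couplingMatrix hreg).eq_zero_of_mulVec_eq_zero hs
    ((zeroNorm_le_of_support_subset hv).trans (zeroNorm_le_of_mem_feas hβ))
    (by simpa [couplingMap, Matrix.toLpLin_apply] using hv0)

end Coupling

section Objective

variable {n p₁ p₂ : ℕ}
  {ℓ₁ : Matrix (Fin n) (Fin p₁) ℝ → (Fin n → ℝ) → EuclideanSpace ℝ (Fin p₁) → ℝ}
  {ℓ₂ : Matrix (Fin n) (Fin p₂) ℝ → (Fin n → ℝ) → EuclideanSpace ℝ (Fin p₂) → ℝ}
  {X : Matrix (Fin n) (Fin p₁) ℝ} {Z : Matrix (Fin n) (Fin p₂) ℝ} {y : Fin n → ℝ} {a b c : ℝ}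

lemma sclObj_eq_add :
    sclObj ℓ₁ ℓ₂ X Z y a b c =
      (fun β => 1 / (n : ℝ) * (a * ℓ₁ X y (part1 β) + b * ℓ₂ Z y (part2 β))) +
        fun β => c / (2 * n) * ‖couplingMap X Z β‖ ^ 2 := by
  ext β
  rw [Pi.add_apply, norm_couplingMap_sq, sclObj]
  ring

lemma strongConvexOn_sclObj (hℓ₁ : ConvexOn ℝ univ (ℓ₁ X y)) (hℓ₂ : ConvexOn ℝ univ (ℓ₂ Z y))
    (ha : 0 ≤ a) (hb : 0 ≤ b) (hc : 0 ≤ c) {V : Submodule ℝ (EuclideanSpace ℝ (Fin (p₁ + p₂)))}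
    {m : ℝ} (hV : ∀ v ∈ V, m * ‖v‖ ^ 2 ≤ ‖couplingMap X Z v‖ ^ 2) :
    StrongConvexOn V (c / n * m) (sclObj ℓ₁ ℓ₂ X Z y a b c) := by
  have hloss := (((hℓ₁.comp_linearMap part1ₗ).smul ha).add
    ((hℓ₂.comp_linearMap part2ₗ).smul hb)).smul (by positivity : (0 : ℝ) ≤ 1 / n)
  have hcoupling := ((couplingMap X Z).strongConvexOn_norm_map_sq hV).const_mul
    (by positivity : 0 ≤ c / (2 * n))
  rw [sclObj_eq_add, show c / n * m = c / (2 * n) * (2 * m) by field_simp]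
  have h := (hloss.subset (subset_univ _) V.convex).uniformConvexOn_zero.add hcoupling
  rw [zero_add] at h
  exact h

lemma continuous_sclObj (hℓ₁ : ConvexOn ℝ univ (ℓ₁ X y)) (hℓ₂ : ConvexOn ℝ univ (ℓ₂ Z y))
    (ha : 0 ≤ a) (hb : 0 ≤ b) (hc : 0 ≤ c) : Continuous (sclObj ℓ₁ ℓ₂ X Z y a b c) := by
  have h := strongConvexOn_sclObj hℓ₁ hℓ₂ ha hb hc (V := ⊤) (m := 0) (by simp)
  rw [mul_zero, strongConvexOn_zero, Submodule.top_coe] at h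
  exact continuousOn_univ.1 (h.continuousOn isOpen_univ)

end Objective

theorem scl_existence_finiteness_uniqueness_general {n p₁ p₂ : ℕ} (hn : 0 < n)
    (X : Matrix (Fin n) (Fin p₁) ℝ) (Z : Matrix (Fin n) (Fin p₂) ℝ) (y : Fin n → ℝ)
    (s₁ s₂ : ℕ) (hs₁p : s₁ < p₁) (hs₂p : s₂ < p₂)
    (a b c : ℝ) (ha : 0 < a) (hb : 0 < b) (hc : 0 < c)
    (ℓ₁ : Matrix (Fin n) (Fin p₁) ℝ → (Fin n → ℝ) → EuclideanSpace ℝ (Fin p₁) → ℝ)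
    (ℓ₂ : Matrix (Fin n) (Fin p₂) ℝ → (Fin n → ℝ) → EuclideanSpace ℝ (Fin p₂) → ℝ)
    (hℓ : (ℓ₁ = ellLog ∧ ℓ₂ = ellLog) ∨ (ℓ₁ = ellLin ∧ ℓ₂ = ellLin))
    (f : EuclideanSpace ℝ (Fin (p₁ + p₂)) → ℝ)
    (hf : f = sclObj ℓ₁ ℓ₂ X Z y a b c)
    (hreg : sRegular (Matrix.of fun i => Fin.append (X i) (Z i)) (s₁ + s₂)) :
    (∃ βs ∈ feas p₁ p₂ s₁ s₂, ∀ β ∈ feas p₁ p₂ s₁ s₂, f βs ≤ f β) ∧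
    {βs | βs ∈ feas p₁ p₂ s₁ s₂ ∧ IsLocalMinOn f (feas p₁ p₂ s₁ s₂) βs}.Finite ∧
    (∀ βs ∈ feas p₁ p₂ s₁ s₂, IsLocalMinOn f (feas p₁ p₂ s₁ s₂) βs →
      ∃ δ > (0 : ℝ), ∃ lf > (0 : ℝ),
        (∀ β ∈ feas p₁ p₂ s₁ s₂, ‖β - βs‖ < δ →
          f βs + lf / 2 * ‖β - βs‖ ^ 2 ≤ f β) ∧
        (∀ β ∈ feas p₁ p₂ s₁ s₂, ‖β - βs‖ < δ → f β ≤ f βs → β = βs)) := by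
  obtain ⟨hℓ₁, hℓ₂⟩ : ConvexOn ℝ univ (ℓ₁ X y) ∧ ConvexOn ℝ univ (ℓ₂ Z y) := by
    rcases hℓ with ⟨rfl, rfl⟩ | ⟨rfl, rfl⟩
    exacts [⟨convexOn_ellLog X y, convexOn_ellLog Z y⟩, ⟨convexOn_ellLin X y, convexOn_ellLin Z y⟩]
  obtain ⟨m, hm, hcoupling⟩ := exists_mul_norm_sq_le_norm_map_sq (couplingMap X Z)
  have hμ : 0 < c / n * m := by positivity
  have hsc : ∀ β ∈ feas p₁ p₂ s₁ s₂,
      StrongConvexOn (coordSubspace (support β.ofLp)) (c / n * m) f := fun β hβ =>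
    hf ▸ strongConvexOn_sclObj hℓ₁ hℓ₂ ha.le hb.le hc.le
      (hcoupling _ (eq_zero_of_couplingMap_eq_zero (by omega) hreg hβ))
  have hfeas := fun β (hβ : β ∈ feas p₁ p₂ s₁ s₂) => coordSubspace_support_subset_feas hβ
  refine ⟨?_, finite_setOf_isLocalMinOn hfeas hsc hμ, fun βs _ hβs => ?_⟩
  · obtain ⟨βs, hβs, hmin⟩ := exists_isMinOn_of_strongConvexOn_coordSubspace hfeas hsc hμ
      (hf ▸ continuous_sclObj hℓ₁ hℓ₂ ha.le hb.le hc.le) ⟨0, zero_mem_feas⟩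
    exact ⟨βs, hβs, isMinOn_iff.1 hmin⟩
  · obtain ⟨δ, hδ, hgrowth⟩ := exists_add_sq_le_of_isLocalMinOn hfeas hsc hμ.le hβs
    exact ⟨δ, hδ, _, hμ, hgrowth, fun β hβ hβδ hle =>
      eq_of_add_mul_norm_sub_sq_le (half_pos hμ) (hgrowth β hβ hβδ) hle⟩

/-- for `ℓ ∈ {ℓ_log, ℓ_lin}`, if `[X Z]` is `(s₁+s₂)`-regular then:
(i) the SCL problem has a global minimizer; (ii) it has only finitely many local minimizers;
(iii) every local minimizer `β*` is strict: there are `δ > 0` and `l_f > 0` with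
`f(β) ≥ f(β*) + (l_f/2)‖β − β*‖²` for all feasible `β` with `‖β − β*‖ < δ`; in particular
`β*` is the unique minimizer of `f` over the feasible set intersected with that neighborhood. -/
theorem scl_existence_finiteness_uniqueness {n p₁ p₂ : ℕ} (hn : 0 < n)
    (X : Matrix (Fin n) (Fin p₁) ℝ) (Z : Matrix (Fin n) (Fin p₂) ℝ) (y : Fin n → ℝ)
    (s₁ s₂ : ℕ) (hs₁ : 0 < s₁) (hs₁p : s₁ < p₁) (hs₂ : 0 < s₂) (hs₂p : s₂ < p₂)
    (a b c : ℝ) (ha : 0 < a) (hb : 0 < b) (hc : 0 < c)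
    (ℓ₁ : Matrix (Fin n) (Fin p₁) ℝ → (Fin n → ℝ) → EuclideanSpace ℝ (Fin p₁) → ℝ)
    (ℓ₂ : Matrix (Fin n) (Fin p₂) ℝ → (Fin n → ℝ) → EuclideanSpace ℝ (Fin p₂) → ℝ)
    (hℓ : (ℓ₁ = ellLog ∧ ℓ₂ = ellLog) ∨ (ℓ₁ = ellLin ∧ ℓ₂ = ellLin))
    (f : EuclideanSpace ℝ (Fin (p₁ + p₂)) → ℝ)
    (hf : f = sclObj ℓ₁ ℓ₂ X Z y a b c)
    (hreg : sRegular (Matrix.of fun i => Fin.append (X i) (Z i)) (s₁ + s₂)) :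
    (∃ βs ∈ feas p₁ p₂ s₁ s₂, ∀ β ∈ feas p₁ p₂ s₁ s₂, f βs ≤ f β) ∧
    {βs | βs ∈ feas p₁ p₂ s₁ s₂ ∧ IsLocalMinOn f (feas p₁ p₂ s₁ s₂) βs}.Finite ∧
    (∀ βs ∈ feas p₁ p₂ s₁ s₂, IsLocalMinOn f (feas p₁ p₂ s₁ s₂) βs →
      ∃ δ > (0 : ℝ), ∃ lf > (0 : ℝ),
        (∀ β ∈ feas p₁ p₂ s₁ s₂, ‖β - βs‖ < δ →
          f βs + lf / 2 * ‖β - βs‖ ^ 2 ≤ f β) ∧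
        (∀ β ∈ feas p₁ p₂ s₁ s₂, ‖β - βs‖ < δ → f β ≤ f βs → β = βs)) :=
  scl_existence_finiteness_uniqueness_general hn X Z y s₁ s₂ hs₁p hs₂p a b c ha hb hc ℓ₁ ℓ₂ hℓ f hf
    hreg
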